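/- arXiv:1108.0018 — 5 statements merged into one kernel-verified Lean document; each statement's English description precedes it below -/
import Mathlib

section
/- Walker's identity: for any pseudo-Riemannian manifold (M,g) with Riemann curvature (0,4)-tensor R and curvature operator 𝓡, one has (𝓡(U,V)R)(W,X,Y,Z) + (𝓡(W,X)R)(Y,Z,U,V) + (𝓡(Y,Z)R)(U,V,W,X) = 0 for all vector fields U,V,W,X,Y,Z. -/
/- Abstract (Koszul-style) framework for a pseudo-Riemannian manifold:
   `M` is the set of points, vector fields are maps `M → E`, smooth functions are `M → ℝ`,
   `D` is the directional-derivative action of vector fields on functions,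
   `br` the Lie bracket, `conn` the Levi-Civita connection and `g` the metric,
   all given as data subject to the standard axioms (`IsLC`). -/

namespace ConcRec

variable {M : Type*} {E : Type*} [AddCommGroup E] [Module ℝ E]

/-- The curvature operator `𝓡(u,v)w` on vector fields. -/
def rop (conn br : (M → E) → (M → E) → (M → E)) (u v w : M → E) : M → E :=
  conn u (conn v w) - conn v (conn u w) - conn (br u v) w

/-- The Riemann curvature (0,4)-tensor `R(w,x,y,z) = g(𝓡(w,x)y, z)`. -/
def rten (g : (M → E) → (M → E) → (M → ℝ))
    (conn br : (M → E) → (M → E) → (M → E)) (w x y z : M → E) : M → ℝ :=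
  g (rop conn br w x y) z

/-- The curvature-like tensor `G(w,x,y,z) = g(x,y)g(w,z) - g(w,y)g(x,z)`. -/
def gten (g : (M → E) → (M → E) → (M → ℝ)) (w x y z : M → E) : M → ℝ :=
  g x y * g w z - g w y * g x z

/-- The operator `𝓖(u,v)w = g(v,w)u - g(u,w)v`. -/
def gop (g : (M → E) → (M → E) → (M → ℝ)) (u v w : M → E) : M → E :=
  (fun p => g v w p • u p) - fun p => g u w p • v p

/-- Covariant derivative `(∇_u T)(w,x,y,z)` of a (0,4)-tensor field. -/
def cd4 (D : (M → E) → (M → ℝ) → (M → ℝ)) (conn : (M → E) → (M → E) → (M → E))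
    (T : (M → E) → (M → E) → (M → E) → (M → E) → M → ℝ) (u w x y z : M → E) : M → ℝ :=
  D u (T w x y z) - T (conn u w) x y z - T w (conn u x) y z
    - T w x (conn u y) z - T w x y (conn u z)

/-- Covariant derivative of a (0,5)-tensor field. -/
def cd5 (D : (M → E) → (M → ℝ) → (M → ℝ)) (conn : (M → E) → (M → E) → (M → E))
    (T : (M → E) → (M → E) → (M → E) → (M → E) → (M → E) → M → ℝ)
    (u v w x y z : M → E) : M → ℝ :=
  D u (T v w x y z) - T (conn u v) w x y z - T v (conn u w) x y z
    - T v w (conn u x) y z - T v w x (conn u y) z - T v w x y (conn u z)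

/-- Second covariant derivative `(∇²_{u,v} T)(w,x,y,z) = (∇(∇T))(u,v,w,x,y,z)`. -/
def scd4 (D : (M → E) → (M → ℝ) → (M → ℝ)) (conn : (M → E) → (M → E) → (M → E))
    (T : (M → E) → (M → E) → (M → E) → (M → E) → M → ℝ) (u v w x y z : M → E) : M → ℝ :=
  cd5 D conn (fun a b c d e => cd4 D conn T a b c d e) u v w x y z

/-- The curvature operator acting on a (0,4)-tensor field:
`(𝓡(u,v)T)(w,x,y,z) = (∇²_{u,v}T - ∇²_{v,u}T)(w,x,y,z)`. -/
def curv4 (D : (M → E) → (M → ℝ) → (M → ℝ)) (conn : (M → E) → (M → E) → (M → E))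
    (T : (M → E) → (M → E) → (M → E) → (M → E) → M → ℝ) (u v w x y z : M → E) : M → ℝ :=
  scd4 D conn T u v w x y z - scd4 D conn T v u w x y z

/-- Covariant derivative `(∇_u ω)(v)` of a 1-form. -/
def cd1 (D : (M → E) → (M → ℝ) → (M → ℝ)) (conn : (M → E) → (M → E) → (M → E))
    (ω : (M → E) → M → ℝ) (u v : M → E) : M → ℝ :=
  D u (ω v) - ω (conn u v)

/-- The axioms of a pseudo-Riemannian structure: `D` is a derivation action,
`br` a Lie bracket compatible with `D`, `conn` a torsion-free metric connection, and
`g` a symmetric (function-)bilinear metric. -/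
def IsLC (D : (M → E) → (M → ℝ) → (M → ℝ)) (conn br : (M → E) → (M → E) → (M → E))
    (g : (M → E) → (M → E) → (M → ℝ)) : Prop :=
  (∀ u v f, D (u + v) f = D u f + D v f) ∧
  (∀ (f : M → ℝ) u h, D (fun p => f p • u p) h = f * D u h) ∧
  (∀ u f h, D u (f + h) = D u f + D u h) ∧
  (∀ u f h, D u (f * h) = D u f * h + f * D u h) ∧
  (∀ u (c : ℝ), D u (fun _ => c) = 0) ∧
  (∀ u v f, D (br u v) f = D u (D v f) - D v (D u f)) ∧
  (∀ u v w, br u (br v w) + br v (br w u) + br w (br u v) = 0) ∧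
  (∀ u v w, conn (u + v) w = conn u w + conn v w) ∧
  (∀ u v w, conn u (v + w) = conn u v + conn u w) ∧
  (∀ (f : M → ℝ) u v, conn (fun p => f p • u p) v = fun p => f p • conn u v p) ∧
  (∀ (f : M → ℝ) u v, conn u (fun p => f p • v p) = fun p => f p • conn u v p + D u f p • v p) ∧
  (∀ u v, conn u v - conn v u = br u v) ∧
  (∀ u x y, D u (g x y) = g (conn u x) y + g x (conn u y)) ∧
  (∀ x y, g x y = g y x) ∧
  (∀ (f : M → ℝ) x y, g (fun p => f p • x p) y = f * g x y) ∧
  (∀ x y z, g (x + y) z = g x z + g y z)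

/-- A 1-form: an `F`-linear map from vector fields to functions. -/
def IsOneForm (ω : (M → E) → M → ℝ) : Prop :=
  (∀ u v, ω (u + v) = ω u + ω v) ∧ (∀ (f : M → ℝ) u, ω (fun p => f p • u p) = f * ω u)

/-- A global frame `e` together with its `g`-dual frame `einv`
(`g(einv i, e j) = δᵢⱼ`, and `e` spans pointwise). -/
def IsDualFrame (g : (M → E) → (M → E) → (M → ℝ)) {n : ℕ} (einv e : Fin n → M → E) : Prop :=
  (∀ i j, g (einv i) (e j) = fun _ => if i = j then (1 : ℝ) else 0) ∧
  (∀ (x : M → E) (p : M), x p = ∑ i, g (einv i) x p • e i p)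

/-- The Ricci tensor `S(x,z) = Trace_g ((v,w) ↦ R(v,x,w,z))`, computed in a dual frame. -/
def ricci (g : (M → E) → (M → E) → (M → ℝ)) (conn br : (M → E) → (M → E) → (M → E))
    {n : ℕ} (einv e : Fin n → M → E) (x z : M → E) : M → ℝ :=
  ∑ i, rten g conn br (einv i) x (e i) z

/-- The scalar curvature `r = Trace_g S`. -/
def scal (g : (M → E) → (M → E) → (M → ℝ)) (conn br : (M → E) → (M → E) → (M → E))
    {n : ℕ} (einv e : Fin n → M → E) : M → ℝ :=
  ∑ i, ricci g conn br einv e (einv i) (e i)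

/-- The concircular curvature tensor `C = R - (r/(n(n-1))) G`. -/
noncomputable def cten (g : (M → E) → (M → E) → (M → ℝ)) (conn br : (M → E) → (M → E) → (M → E))
    {n : ℕ} (einv e : Fin n → M → E) (w x y z : M → E) : M → ℝ :=
  fun p => rten g conn br w x y z p
    - scal g conn br einv e p / ((n : ℝ) * ((n : ℝ) - 1)) * gten g w x y z p

/-- The 1-form `μ = (1/(n(n-1)))(dr - r λ)`. -/
noncomputable def muForm (D : (M → E) → (M → ℝ) → (M → ℝ)) (g : (M → E) → (M → E) → (M → ℝ))
    (conn br : (M → E) → (M → E) → (M → E)) {n : ℕ} (einv e : Fin n → M → E)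
    (lam : (M → E) → M → ℝ) (u : M → E) : M → ℝ :=
  fun p => (D u (scal g conn br einv e) p - scal g conn br einv e p * lam u p)
    / ((n : ℝ) * ((n : ℝ) - 1))

end ConcRec


section WalkerHelpers

open ConcRec

variable {M : Type*} {E : Type*} [AddCommGroup E] [Module ℝ E]
variable {D : (M → E) → (M → ℝ) → (M → ℝ)} {conn br : (M → E) → (M → E) → (M → E)}
variable {g : (M → E) → (M → E) → (M → ℝ)}

private lemma subhom {A B : Type*} [AddCommGroup A] [AddCommGroup B] (f : A → B)
    (h : ∀ a b, f (a + b) = f a + f b) (a b : A) : f (a - b) = f a - f b := by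
  simpa using (AddMonoidHom.mk' f h).map_sub a b

private lemma zerohom {A B : Type*} [AddCommGroup A] [AddCommGroup B] (f : A → B)
    (h : ∀ a b, f (a + b) = f a + f b) : f 0 = 0 := by
  simpa using (AddMonoidHom.mk' f h).map_zero

/-- Ricci identity for a (0,4)-tensor that is additive in each slot. -/
private lemma ricci4 (hLC : IsLC D conn br g)
    (T : (M → E) → (M → E) → (M → E) → (M → E) → M → ℝ)
    (hT1 : ∀ a b x y z, T (a - b) x y z = T a x y z - T b x y z)
    (hT2 : ∀ w a b y z, T w (a - b) y z = T w a y z - T w b y z)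
    (hT3 : ∀ w x a b z, T w x (a - b) z = T w x a z - T w x b z)
    (hT4 : ∀ w x y a b, T w x y (a - b) = T w x y a - T w x y b)
    (u v w x y z : M → E) :
    curv4 D conn T u v w x y z
      = -(T (rop conn br u v w) x y z + T w (rop conn br u v x) y z
          + T w x (rop conn br u v y) z + T w x y (rop conn br u v z)) := by
  obtain ⟨hDaddv, -, hDaddf, -, -, hDbr, -, hCaddl, hCaddr, -, -, htor, -, -, -, -⟩ := hLC
  have hbr' : ∀ a b, br a b = conn a b - conn b a := fun a b => (htor a b).symm
  have hDsubf : ∀ u f h, D u (f - h) = D u f - D u h := fun u => subhom (D u) (hDaddf u)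
  have hCsubl : ∀ a b c, conn (a - b) c = conn a c - conn b c :=
    fun a b c => subhom (fun t => conn t c) (fun s t => hCaddl s t c) a b
  have key : D (conn u v) (T w x y z) - D (conn v u) (T w x y z)
      = D u (D v (T w x y z)) - D v (D u (T w x y z)) := by
    have h1 : conn u v = br u v + conn v u := by rw [← htor u v]; abel
    rw [h1, hDaddv, hDbr]; ring
  simp only [curv4, scd4, cd5, cd4, rop, hbr', hCsubl, hDsubf, hT1, hT2, hT3, hT4]
  linear_combination -key

private lemma rop_addl (hLC : IsLC D conn br g) (a b v w : M → E) :
    rop conn br (a + b) v w = rop conn br a v w + rop conn br b v w := by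
  obtain ⟨-, -, -, -, -, -, -, hCaddl, hCaddr, -, -, htor, -, -, -, -⟩ := hLC
  have hbr' : ∀ a b, br a b = conn a b - conn b a := fun a b => (htor a b).symm
  have hCsubl : ∀ a b c, conn (a - b) c = conn a c - conn b c :=
    fun a b c => subhom (fun t => conn t c) (fun s t => hCaddl s t c) a b
  simp only [rop, hbr', hCsubl, hCaddl, hCaddr]
  abel

private lemma rop_addm (hLC : IsLC D conn br g) (a v v' w : M → E) :
    rop conn br a (v + v') w = rop conn br a v w + rop conn br a v' w := by
  obtain ⟨-, -, -, -, -, -, -, hCaddl, hCaddr, -, -, htor, -, -, -, -⟩ := hLC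
  have hbr' : ∀ a b, br a b = conn a b - conn b a := fun a b => (htor a b).symm
  have hCsubl : ∀ a b c, conn (a - b) c = conn a c - conn b c :=
    fun a b c => subhom (fun t => conn t c) (fun s t => hCaddl s t c) a b
  simp only [rop, hbr', hCsubl, hCaddl, hCaddr]
  abel

private lemma rop_addr (hLC : IsLC D conn br g) (a v w w' : M → E) :
    rop conn br a v (w + w') = rop conn br a v w + rop conn br a v w' := by
  obtain ⟨-, -, -, -, -, -, -, hCaddl, hCaddr, -, -, htor, -, -, -, -⟩ := hLC
  simp only [rop, hCaddr]
  abel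

private lemma g_addr (hLC : IsLC D conn br g) (x y z : M → E) :
    g x (y + z) = g x y + g x z := by
  obtain ⟨-, -, -, -, -, -, -, -, -, -, -, -, -, hgsym, -, hgaddl⟩ := hLC
  rw [hgsym x (y + z), hgaddl, hgsym y x, hgsym z x]

private lemma skew (hLC : IsLC D conn br g) (u v x : M → E) :
    g (rop conn br u v x) x = 0 := by
  obtain ⟨-, -, hDaddf, -, -, hDbr, -, -, -, -, -, -, hmetr, hgsym, -, hgaddl⟩ := hLC
  have hgsubl : ∀ a b c, g (a - b) c = g a c - g b c :=
    fun a b c => subhom (fun t => g t c) (fun s t => hgaddl s t c) a b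
  have e1 : g (rop conn br u v x) x
      = g (conn u (conn v x)) x - g (conn v (conn u x)) x - g (conn (br u v) x) x := by
    simp only [rop, hgsubl]
  have a1 : D u (D v (g x x)) = D u (g (conn v x) x) + D u (g x (conn v x)) := by
    rw [hmetr v x x, hDaddf]
  have a2 := hmetr u (conn v x) x
  have a3 := hmetr u x (conn v x)
  have b1 : D v (D u (g x x)) = D v (g (conn u x) x) + D v (g x (conn u x)) := by
    rw [hmetr u x x, hDaddf]
  have b2 := hmetr v (conn u x) x
  have b3 := hmetr v x (conn u x)
  have c1 := hDbr u v (g x x)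
  have c2 := hmetr (br u v) x x
  have s1 := hgsym x (conn (br u v) x)
  have s2 := hgsym (conn v x) (conn u x)
  have s3 := hgsym x (conn u (conn v x))
  have s4 := hgsym x (conn v (conn u x))
  rw [e1]
  funext p
  have a1p := congrFun a1 p; have a2p := congrFun a2 p; have a3p := congrFun a3 p
  have b1p := congrFun b1 p; have b2p := congrFun b2 p; have b3p := congrFun b3 p
  have c1p := congrFun c1 p; have c2p := congrFun c2 p
  have s1p := congrFun s1 p; have s2p := congrFun s2 p
  have s3p := congrFun s3 p; have s4p := congrFun s4 p
  simp only [Pi.add_apply, Pi.sub_apply, Pi.zero_apply] at a1p a2p a3p b1p b2p b3p c1p c2p s1p s2p s3p s4p ⊢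
  linarith

private lemma antisym34 (hLC : IsLC D conn br g) (a b c d : M → E) :
    rten g conn br a b c d = - rten g conn br a b d c := by
  obtain ⟨-, -, -, -, -, -, -, -, -, -, -, -, -, -, -, hgaddl⟩ := id hLC
  have h := skew hLC a b (c + d)
  rw [rop_addr hLC a b c d, hgaddl, g_addr hLC, g_addr hLC,
    skew hLC a b c, skew hLC a b d] at h
  simp only [rten]
  linear_combination h

private lemma antisym12 (hLC : IsLC D conn br g) (a b c d : M → E) :
    rten g conn br a b c d = - rten g conn br b a c d := by
  obtain ⟨-, -, -, -, -, -, -, hCaddl, -, -, -, htor, -, -, -, hgaddl⟩ := id hLC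
  have hbr' : ∀ a b, br a b = conn a b - conn b a := fun a b => (htor a b).symm
  have hCsubl : ∀ a b c, conn (a - b) c = conn a c - conn b c :=
    fun a b c => subhom (fun t => conn t c) (fun s t => hCaddl s t c) a b
  have hrop : rop conn br a b c + rop conn br b a c = 0 := by
    simp only [rop, hbr', hCsubl]; abel
  have h : g (rop conn br a b c + rop conn br b a c) d = 0 := by
    rw [hrop]; exact zerohom (fun t => g t d) (fun s t => hgaddl s t d)
  rw [hgaddl] at h
  simp only [rten]
  linear_combination h

private lemma bianchi1 (hLC : IsLC D conn br g) (a b c d : M → E) :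
    rten g conn br a b c d + rten g conn br b c a d + rten g conn br c a b d = 0 := by
  obtain ⟨-, -, -, -, -, -, hjac, hCaddl, hCaddr, -, -, htor, -, -, -, hgaddl⟩ := id hLC
  have hbr' : ∀ a b, br a b = conn a b - conn b a := fun a b => (htor a b).symm
  have hCsubl : ∀ a b c, conn (a - b) c = conn a c - conn b c :=
    fun a b c => subhom (fun t => conn t c) (fun s t => hCaddl s t c) a b
  have hCsubr : ∀ a b c, conn a (b - c) = conn a b - conn a c :=
    fun a b c => subhom (fun t => conn a t) (fun s t => hCaddr a s t) b c
  have hrop : rop conn br a b c + rop conn br b c a + rop conn br c a b = 0 := by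
    have h2 : rop conn br a b c + rop conn br b c a + rop conn br c a b
        = br a (br b c) + br b (br c a) + br c (br a b) := by
      simp only [rop, hbr', hCsubl, hCsubr]; abel
    rw [h2, hjac]
  have h : g (rop conn br a b c + rop conn br b c a + rop conn br c a b) d = 0 := by
    rw [hrop]; exact zerohom (fun t => g t d) (fun s t => hgaddl s t d)
  rw [hgaddl, hgaddl] at h
  simp only [rten]
  linear_combination h

private lemma pairsym (hLC : IsLC D conn br g) (a b c d : M → E) :
    rten g conn br a b c d = rten g conn br c d a b := by
  have b1 := bianchi1 hLC a b c d
  have b2 := bianchi1 hLC b c d a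
  have b3 := bianchi1 hLC c d a b
  have b4 := bianchi1 hLC d a b c
  have e1 := antisym34 hLC b c d a
  have e2 := antisym34 hLC c d b a
  have e3a := antisym12 hLC d b c a
  have e3b := antisym34 hLC b d c a
  have e4a := antisym12 hLC d a c b
  have e4b := antisym34 hLC a d c b
  have e5 := antisym34 hLC a c d b
  have e6 := antisym12 hLC c a b d
  have e7 := antisym34 hLC a b d c
  have e8 := antisym12 hLC d a b c
  funext p
  have b1p := congrFun b1 p; have b2p := congrFun b2 p
  have b3p := congrFun b3 p; have b4p := congrFun b4 p
  have e1p := congrFun e1 p; have e2p := congrFun e2 p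
  have e3ap := congrFun e3a p; have e3bp := congrFun e3b p
  have e4ap := congrFun e4a p; have e4bp := congrFun e4b p
  have e5p := congrFun e5 p; have e6p := congrFun e6 p
  have e7p := congrFun e7 p; have e8p := congrFun e8 p
  simp only [Pi.add_apply, Pi.neg_apply, Pi.zero_apply] at b1p b2p b3p b4p e1p e2p e3ap e3bp e4ap e4bp e5p e6p e7p e8p ⊢
  linarith

private lemma lswap (hLC : IsLC D conn br g) (a b c e f k : M → E) :
    rten g conn br a b c (rop conn br e f k)
      = rten g conn br e f k (rop conn br a b c) := by
  obtain ⟨-, -, -, -, -, -, -, -, -, -, -, -, -, hgsym, -, -⟩ := id hLC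
  simp only [rten]
  exact hgsym _ _

end WalkerHelpers

open ConcRec in
/-- Walker's identity:
`(𝓡(u,v)R)(w,x,y,z) + (𝓡(w,x)R)(y,z,u,v) + (𝓡(y,z)R)(u,v,w,x) = 0`. -/
theorem walker_identity
    {M : Type*} {E : Type*} [AddCommGroup E] [Module ℝ E]
    (D : (M → E) → (M → ℝ) → (M → ℝ)) (conn br : (M → E) → (M → E) → (M → E))
    (g : (M → E) → (M → E) → (M → ℝ)) (hLC : IsLC D conn br g) :
    ∀ u v w x y z,
      curv4 D conn (rten g conn br) u v w x y z
      + curv4 D conn (rten g conn br) w x y z u v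
      + curv4 D conn (rten g conn br) y z u v w x = 0 := by
  obtain ⟨-, -, -, -, -, -, -, -, -, -, -, -, -, -, -, hgaddl⟩ := id hLC
  intro u v w x y z
  have hrs1 : ∀ a b x y z, rten g conn br (a - b) x y z
      = rten g conn br a x y z - rten g conn br b x y z := fun a b x y z =>
    subhom (fun t => rten g conn br t x y z)
      (fun s t => by simp only [rten]; rw [rop_addl hLC, hgaddl]) a b
  have hrs2 : ∀ w a b y z, rten g conn br w (a - b) y z
      = rten g conn br w a y z - rten g conn br w b y z := fun w a b y z =>
    subhom (fun t => rten g conn br w t y z)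
      (fun s t => by simp only [rten]; rw [rop_addm hLC, hgaddl]) a b
  have hrs3 : ∀ w x a b z, rten g conn br w x (a - b) z
      = rten g conn br w x a z - rten g conn br w x b z := fun w x a b z =>
    subhom (fun t => rten g conn br w x t z)
      (fun s t => by simp only [rten]; rw [rop_addr hLC, hgaddl]) a b
  have hrs4 : ∀ w x y a b, rten g conn br w x y (a - b)
      = rten g conn br w x y a - rten g conn br w x y b := fun w x y a b =>
    subhom (fun t => rten g conn br w x y t)
      (fun s t => by simp only [rten]; rw [g_addr hLC]) a b
  rw [ricci4 hLC _ hrs1 hrs2 hrs3 hrs4 u v w x y z,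
    ricci4 hLC _ hrs1 hrs2 hrs3 hrs4 w x y z u v,
    ricci4 hLC _ hrs1 hrs2 hrs3 hrs4 y z u v w x]
  have hA1 : rten g conn br (rop conn br u v w) x y z
      + rten g conn br u v w (rop conn br y z x) = 0 := by
    rw [pairsym hLC (rop conn br u v w) x y z, antisym34 hLC y z (rop conn br u v w) x,
      lswap hLC y z x u v w]; ring
  have hA2 : rten g conn br w (rop conn br u v x) y z
      + rten g conn br u v (rop conn br y z w) x = 0 := by
    rw [pairsym hLC w (rop conn br u v x) y z, lswap hLC y z w u v x,
      antisym34 hLC u v (rop conn br y z w) x]; ring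
  have hA3 : rten g conn br w x (rop conn br u v y) z
      + rten g conn br y (rop conn br w x z) u v = 0 := by
    rw [antisym34 hLC w x (rop conn br u v y) z, lswap hLC w x z u v y,
      pairsym hLC y (rop conn br w x z) u v]; ring
  have hA4 : rten g conn br w x y (rop conn br u v z)
      + rten g conn br (rop conn br w x y) z u v = 0 := by
    rw [lswap hLC w x y u v z, pairsym hLC (rop conn br w x y) z u v,
      antisym34 hLC u v (rop conn br w x y) z]; ring
  have hB3 : rten g conn br y z (rop conn br w x u) v
      + rten g conn br u (rop conn br y z v) w x = 0 := by
    rw [antisym34 hLC y z (rop conn br w x u) v, lswap hLC y z v w x u,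
      pairsym hLC u (rop conn br y z v) w x]; ring
  have hB4 : rten g conn br y z u (rop conn br w x v)
      + rten g conn br (rop conn br y z u) v w x = 0 := by
    rw [lswap hLC y z u w x v, pairsym hLC (rop conn br y z u) v w x,
      antisym34 hLC w x (rop conn br y z u) v]; ring
  linear_combination -(hA1 + hA2 + hA3 + hA4 + hB3 + hB4)
end

section
/- Let (M,g) be a pseudo-Riemannian manifold whose concircular curvature tensor C = R - (r/(n(n-1)))·G is recurrent: ∇C = λ ⊗ C with C nowhere zero. Then the recurrence 1-form λ is closed: dλ = 0. -/
namespace ConcRec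

set_option linter.unusedSectionVars false
set_option maxHeartbeats 2000000

variable {M : Type*} {E : Type*} [AddCommGroup E] [Module ℝ E]

section Aux

variable (D : (M → E) → (M → ℝ) → (M → ℝ)) (conn br : (M → E) → (M → E) → (M → E))
    (g : (M → E) → (M → E) → (M → ℝ))

variable
  (hDv : ∀ u v f, D (u + v) f = D u f + D v f)
  (hDa : ∀ u f h, D u (f + h) = D u f + D u h)
  (hDm : ∀ u f h, D u (f * h) = D u f * h + f * D u h)
  (hDbr : ∀ u v f, D (br u v) f = D u (D v f) - D v (D u f))
  (hJac : ∀ u v w, br u (br v w) + br v (br w u) + br w (br u v) = 0)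
  (hCa1 : ∀ u v w, conn (u + v) w = conn u w + conn v w)
  (hCa2 : ∀ u v w, conn u (v + w) = conn u v + conn u w)
  (hTor : ∀ u v, conn u v - conn v u = br u v)
  (hMet : ∀ u x y, D u (g x y) = g (conn u x) y + g x (conn u y))
  (hGs : ∀ x y, g x y = g y x)
  (hGa : ∀ x y z, g (x + y) z = g x z + g y z)

include hDv in
lemma Dv_sub : ∀ u v f, D (u - v) f = D u f - D v f := fun u v f =>
  eq_sub_of_add_eq (by rw [← hDv, sub_add_cancel])

include hDa in
lemma Df_sub : ∀ u f h, D u (f - h) = D u f - D u h := fun u f h =>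
  eq_sub_of_add_eq (by rw [← hDa, sub_add_cancel])

include hCa1 in
lemma conn_sub1 : ∀ u v w, conn (u - v) w = conn u w - conn v w := fun u v w =>
  eq_sub_of_add_eq (by rw [← hCa1, sub_add_cancel])

include hCa2 in
lemma conn_sub2 : ∀ u v w, conn u (v - w) = conn u v - conn u w := fun u v w =>
  eq_sub_of_add_eq (by rw [← hCa2, sub_add_cancel])

include hGa in
lemma g_sub1 : ∀ x y z, g (x - y) z = g x z - g y z := fun x y z =>
  eq_sub_of_add_eq (by rw [← hGa, sub_add_cancel])

include hGs hGa in
lemma g_add2 : ∀ x y z, g x (y + z) = g x y + g x z := fun x y z => by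
  rw [hGs, hGa, hGs y x, hGs z x]

include hGs hGa in
lemma g_sub2 : ∀ x y z, g x (y - z) = g x y - g x z := fun x y z =>
  eq_sub_of_add_eq (by rw [← g_add2 g hGs hGa, sub_add_cancel])

include hGa in
lemma g_zero1 : ∀ z, g 0 z = 0 := fun z => by
  have := g_sub1 g hGa 0 0 z; rwa [sub_self, sub_self] at this

include hGa in
lemma g_neg1 : ∀ x z, g (-x) z = - g x z := fun x z => by
  have := g_sub1 g hGa 0 x z
  rwa [zero_sub, g_zero1 g hGa, zero_sub] at this

include hCa1 in
lemma conn_zero1 : ∀ w, conn 0 w = 0 := fun w => by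
  have := conn_sub1 conn hCa1 w w w; rwa [sub_self, sub_self] at this

include hCa1 in
lemma conn_neg1 : ∀ u w, conn (-u) w = - conn u w := fun u w => by
  have := conn_sub1 conn hCa1 0 u w
  rwa [zero_sub, conn_zero1 conn hCa1, zero_sub] at this

include hTor in
lemma br_skew : ∀ u v, br v u = - br u v := fun u v => by
  rw [← hTor u v, ← hTor v u]; abel

include hCa1 hTor in
lemma rop_skew : ∀ u v w, rop conn br u v w = - rop conn br v u w := fun u v w => by
  rw [rop, rop, br_skew conn br hTor, conn_neg1 conn hCa1]; abel

include hJac hCa2 hTor in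
lemma rop_bianchi : ∀ u v w,
    rop conn br u v w + rop conn br v w u + rop conn br w u v = 0 := fun u v w => by
  have h1 : ∀ a b c : M → E, conn a (br b c) = conn a (conn b c) - conn a (conn c b) :=
    fun a b c => by rw [← hTor b c, conn_sub2 conn hCa2]
  have h2 : ∀ a b : M → E, br a b = conn a b - conn b a := fun a b => (hTor a b).symm
  have j := hJac u v w
  rw [h2 u (br v w), h2 v (br w u), h2 w (br u v), h1 u v w, h1 v w u, h1 w u v] at j
  simp only [rop]
  calc conn u (conn v w) - conn v (conn u w) - conn (br u v) w +
        (conn v (conn w u) - conn w (conn v u) - conn (br v w) u) +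
        (conn w (conn u v) - conn u (conn w v) - conn (br w u) v)
      = conn u (conn v w) - conn u (conn w v) - conn (br v w) u +
        (conn v (conn w u) - conn v (conn u w) - conn (br w u) v) +
        (conn w (conn u v) - conn w (conn v u) - conn (br u v) w) := by abel
    _ = 0 := j

-- metric skew-symmetry of the curvature operator
include hDa hDbr hMet hGs hGa in
lemma g_rop_skew : ∀ u v y z,
    g (rop conn br u v y) z = - g y (rop conn br u v z) := by
  intro u v y z
  have key : D u (D v (g y z)) - D v (D u (g y z)) - D (br u v) (g y z) = 0 := by
    rw [hDbr]; abel
  have e2 : D u (D v (g y z)) =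
      g (conn u (conn v y)) z + g (conn v y) (conn u z) +
        (g (conn u y) (conn v z) + g y (conn u (conn v z))) := by
    rw [hMet v y z, hDa, hMet u (conn v y) z, hMet u y (conn v z)]
  have e3 : D v (D u (g y z)) =
      g (conn v (conn u y)) z + g (conn u y) (conn v z) +
        (g (conn v y) (conn u z) + g y (conn v (conn u z))) := by
    rw [hMet u y z, hDa, hMet v (conn u y) z, hMet v y (conn u z)]
  have e4 : D (br u v) (g y z) = g (conn (br u v) y) z + g y (conn (br u v) z) :=
    hMet _ y z
  have e5 : g (rop conn br u v y) z =
      g (conn u (conn v y)) z - g (conn v (conn u y)) z - g (conn (br u v) y) z := by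
    rw [rop, g_sub1 g hGa, g_sub1 g hGa]
  have e6 : g y (rop conn br u v z) =
      g y (conn u (conn v z)) - g y (conn v (conn u z)) - g y (conn (br u v) z) := by
    rw [rop, g_sub2 g hGs hGa, g_sub2 g hGs hGa]
  rw [e5, e6]
  linear_combination key - e2 + e3 + e4

include hCa1 hTor hGa in
lemma rten_skew12 : ∀ u v y z,
    rten g conn br u v y z = - rten g conn br v u y z := fun u v y z => by
  rw [rten, rten, rop_skew conn br hCa1 hTor, g_neg1 g hGa]

include hDa hDbr hMet hGs hGa in
lemma rten_skew34 : ∀ u v y z,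
    rten g conn br u v y z = - rten g conn br u v z y := fun u v y z => by
  rw [rten, rten, g_rop_skew D conn br g hDa hDbr hMet hGs hGa,
    hGs y (rop conn br u v z)]

include hJac hCa2 hTor hGa in
lemma rten_bianchi : ∀ u v w z,
    rten g conn br u v w z + rten g conn br v w u z + rten g conn br w u v z = 0 :=
  fun u v w z => by
  simp only [rten]
  calc g (rop conn br u v w) z + g (rop conn br v w u) z + g (rop conn br w u v) z
      = g (rop conn br u v w + rop conn br v w u + rop conn br w u v) z := by
        rw [hGa, hGa]
    _ = g 0 z := by rw [rop_bianchi conn br hJac hCa2 hTor]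
    _ = 0 := g_zero1 g hGa z

include hDa hDbr hJac hCa1 hCa2 hTor hMet hGs hGa in
lemma rten_pair : ∀ w x y z,
    rten g conn br w x y z = rten g conn br y z w x := by
  intro w x y z
  have sk12 : ∀ a b c d, ∀ p : M, rten g conn br a b c d p = - rten g conn br b a c d p :=
    fun a b c d p => congrFun (rten_skew12 conn br g hCa1 hTor hGa a b c d) p
  have sk34 : ∀ a b c d, ∀ p : M, rten g conn br a b c d p = - rten g conn br a b d c p :=
    fun a b c d p =>
      congrFun (rten_skew34 D conn br g hDa hDbr hMet hGs hGa a b c d) p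
  have bi : ∀ a b c d, ∀ p : M, rten g conn br a b c d p + rten g conn br b c a d p
      + rten g conn br c a b d p = 0 := fun a b c d p => by
    have := congrFun (rten_bianchi conn br g hJac hCa2 hTor hGa a b c d) p
    simpa using this
  funext p
  have B1 := bi w x y z p
  have B2 := bi x y z w p
  have B3 := bi y z w x p
  have B4 := bi z w x y p
  have s1 := sk34 x y w z p
  have s2 := sk12 y w x z p
  have s2' := sk34 w y x z p
  have s3 := sk34 y z x w p
  have s4 := sk12 z x y w p
  have s4' := sk34 x z y w p
  have s5 := sk34 z w y x p
  have s6 := sk34 w x z y p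
  have s7 := sk12 w y z x p
  have s8 := sk12 x z w y p
  linarith

end Aux

section Aux2

variable (D : (M → E) → (M → ℝ) → (M → ℝ)) (conn br : (M → E) → (M → E) → (M → E))
    (g : (M → E) → (M → E) → (M → ℝ))

variable
  (hDv : ∀ u v f, D (u + v) f = D u f + D v f)
  (hDa : ∀ u f h, D u (f + h) = D u f + D u h)
  (hDm : ∀ u f h, D u (f * h) = D u f * h + f * D u h)
  (hDbr : ∀ u v f, D (br u v) f = D u (D v f) - D v (D u f))
  (hJac : ∀ u v w, br u (br v w) + br v (br w u) + br w (br u v) = 0)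
  (hCa1 : ∀ u v w, conn (u + v) w = conn u w + conn v w)
  (hCa2 : ∀ u v w, conn u (v + w) = conn u v + conn u w)
  (hTor : ∀ u v, conn u v - conn v u = br u v)
  (hMet : ∀ u x y, D u (g x y) = g (conn u x) y + g x (conn u y))
  (hGs : ∀ x y, g x y = g y x)
  (hGa : ∀ x y z, g (x + y) z = g x z + g y z)

lemma rten_eq_g : ∀ a b c X : M → E, rten g conn br a b c X = g (rop conn br a b c) X :=
  fun _ _ _ _ => rfl

include hDa hDbr hJac hCa1 hCa2 hTor hMet hGs hGa in
lemma rten_move1 : ∀ A x y z : M → E,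
    rten g conn br A x y z = - g (rop conn br y z x) A := by
  intro A x y z
  rw [rten_pair D conn br g hDa hDbr hJac hCa1 hCa2 hTor hMet hGs hGa A x y z,
    rten_skew34 D conn br g hDa hDbr hMet hGs hGa y z A x]
  rfl

include hDa hDbr hJac hCa1 hCa2 hTor hMet hGs hGa in
lemma rten_move2 : ∀ A x y z : M → E,
    rten g conn br x A y z = g (rop conn br y z x) A := by
  intro A x y z
  rw [rten_skew12 conn br g hCa1 hTor hGa x A y z,
    rten_move1 D conn br g hDa hDbr hJac hCa1 hCa2 hTor hMet hGs hGa A x y z, neg_neg]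

include hDa hDbr hMet hGs hGa in
lemma rten_move3 : ∀ A x y z : M → E,
    rten g conn br x y A z = - g (rop conn br x y z) A := by
  intro A x y z
  rw [rten_skew34 D conn br g hDa hDbr hMet hGs hGa x y A z]
  rfl

include hDa hDbr hJac hCa1 hCa2 hTor hMet hGs hGa in
lemma cyc_sum_zero : ∀ u v w x y z : M → E,
    (rten g conn br (rop conn br u v w) x y z
      + rten g conn br w (rop conn br u v x) y z
      + rten g conn br w x (rop conn br u v y) z
      + rten g conn br w x y (rop conn br u v z))
    + (rten g conn br (rop conn br w x y) z u v
      + rten g conn br y (rop conn br w x z) u v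
      + rten g conn br y z (rop conn br w x u) v
      + rten g conn br y z u (rop conn br w x v))
    + (rten g conn br (rop conn br y z u) v w x
      + rten g conn br u (rop conn br y z v) w x
      + rten g conn br u v (rop conn br y z w) x
      + rten g conn br u v w (rop conn br y z x)) = 0 := by
  intro u v w x y z
  have M1 := rten_move1 D conn br g hDa hDbr hJac hCa1 hCa2 hTor hMet hGs hGa
  have M2 := rten_move2 D conn br g hDa hDbr hJac hCa1 hCa2 hTor hMet hGs hGa
  have M3 := rten_move3 D conn br g hDa hDbr hMet hGs hGa
  rw [M1 (rop conn br u v w) x y z, M2 (rop conn br u v x) w y z,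
    M3 (rop conn br u v y) w x z,
    M1 (rop conn br w x y) z u v, M2 (rop conn br w x z) y u v,
    M3 (rop conn br w x u) y z v,
    M1 (rop conn br y z u) v w x, M2 (rop conn br y z v) u w x,
    M3 (rop conn br y z w) u v x,
    rten_eq_g conn br g w x y (rop conn br u v z),
    rten_eq_g conn br g y z u (rop conn br w x v),
    rten_eq_g conn br g u v w (rop conn br y z x),
    hGs (rop conn br u v w) (rop conn br y z x),
    hGs (rop conn br u v x) (rop conn br y z w),
    hGs (rop conn br u v y) (rop conn br w x z),
    hGs (rop conn br u v z) (rop conn br w x y),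
    hGs (rop conn br w x u) (rop conn br y z v),
    hGs (rop conn br w x v) (rop conn br y z u)]
  abel


include hCa1 hCa2 hTor in
lemma br_add1 : ∀ a b v : M → E, br (a + b) v = br a v + br b v := fun a b v => by
  rw [← hTor (a + b) v, ← hTor a v, ← hTor b v, hCa1, hCa2]; abel

include hCa1 hCa2 hTor in
lemma br_add2 : ∀ u a b : M → E, br u (a + b) = br u a + br u b := fun u a b => by
  rw [← hTor u (a + b), ← hTor u a, ← hTor u b, hCa2, hCa1]; abel

include hCa1 hCa2 hTor in
lemma rop_add1 : ∀ a b v w : M → E,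
    rop conn br (a + b) v w = rop conn br a v w + rop conn br b v w := fun a b v w => by
  simp only [rop, br_add1 conn br hCa1 hCa2 hTor, hCa1, hCa2]; abel

include hCa1 hCa2 hTor in
lemma rop_add2 : ∀ u a b w : M → E,
    rop conn br u (a + b) w = rop conn br u a w + rop conn br u b w := fun u a b w => by
  simp only [rop, br_add2 conn br hCa1 hCa2 hTor, hCa1, hCa2]; abel

include hCa2 in
lemma rop_add3 : ∀ u v a b : M → E,
    rop conn br u v (a + b) = rop conn br u v a + rop conn br u v b := fun u v a b => by
  simp only [rop, hCa2]; abel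

include hCa1 hCa2 hTor in
lemma rop_sub1 : ∀ a b v w : M → E,
    rop conn br (a - b) v w = rop conn br a v w - rop conn br b v w := fun a b v w =>
  eq_sub_of_add_eq (by rw [← rop_add1 conn br hCa1 hCa2 hTor, sub_add_cancel])

include hCa1 hCa2 hTor in
lemma rop_sub2 : ∀ u a b w : M → E,
    rop conn br u (a - b) w = rop conn br u a w - rop conn br u b w := fun u a b w =>
  eq_sub_of_add_eq (by rw [← rop_add2 conn br hCa1 hCa2 hTor, sub_add_cancel])

include hCa2 in
lemma rop_sub3 : ∀ u v a b : M → E,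
    rop conn br u v (a - b) = rop conn br u v a - rop conn br u v b := fun u v a b =>
  eq_sub_of_add_eq (by rw [← rop_add3 conn br hCa2, sub_add_cancel])

include hCa1 hCa2 hTor hGa in
lemma rten_sub1 : ∀ a b x y z : M → E,
    rten g conn br (a - b) x y z = rten g conn br a x y z - rten g conn br b x y z :=
  fun a b x y z => by
  simp only [rten_eq_g conn br g]
  rw [rop_sub1 conn br hCa1 hCa2 hTor, g_sub1 g hGa]

include hCa1 hCa2 hTor hGa in
lemma rten_sub2 : ∀ w a b y z : M → E,
    rten g conn br w (a - b) y z = rten g conn br w a y z - rten g conn br w b y z :=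
  fun w a b y z => by
  simp only [rten_eq_g conn br g]
  rw [rop_sub2 conn br hCa1 hCa2 hTor, g_sub1 g hGa]

include hCa2 hGa in
lemma rten_sub3 : ∀ w x a b z : M → E,
    rten g conn br w x (a - b) z = rten g conn br w x a z - rten g conn br w x b z :=
  fun w x a b z => by
  simp only [rten_eq_g conn br g]
  rw [rop_sub3 conn br hCa2, g_sub1 g hGa]

include hGs hGa in
lemma rten_sub4 : ∀ w x y a b : M → E,
    rten g conn br w x y (a - b) = rten g conn br w x y a - rten g conn br w x y b :=
  fun w x y a b => by
  simp only [rten_eq_g conn br g]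
  rw [g_sub2 g hGs hGa]

include hGs in
lemma gten_pair : ∀ w x y z : M → E, gten g w x y z = gten g y z w x := fun w x y z => by
  simp only [gten]
  rw [hGs z w, hGs y x, hGs y w, hGs z x]; ring

include hGa in
lemma gten_sub1 : ∀ a b x y z : M → E,
    gten g (a - b) x y z = gten g a x y z - gten g b x y z := fun a b x y z => by
  simp only [gten]
  rw [g_sub1 g hGa, g_sub1 g hGa]; ring

include hGa in
lemma gten_sub2 : ∀ w a b y z : M → E,
    gten g w (a - b) y z = gten g w a y z - gten g w b y z := fun w a b y z => by
  simp only [gten]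
  rw [g_sub1 g hGa, g_sub1 g hGa]; ring

include hGs hGa in
lemma gten_sub3 : ∀ w x a b z : M → E,
    gten g w x (a - b) z = gten g w x a z - gten g w x b z := fun w x a b z => by
  simp only [gten]
  rw [g_sub2 g hGs hGa, g_sub2 g hGs hGa]; ring

include hGs hGa in
lemma gten_sub4 : ∀ w x y a b : M → E,
    gten g w x y (a - b) = gten g w x y a - gten g w x y b := fun w x y a b => by
  simp only [gten]
  rw [g_sub2 g hGs hGa, g_sub2 g hGs hGa]; ring

include hDa hDbr hMet hGs hGa in
lemma qg_zero : ∀ u v w x y z : M → E,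
    gten g (rop conn br u v w) x y z + gten g w (rop conn br u v x) y z
      + gten g w x (rop conn br u v y) z + gten g w x y (rop conn br u v z) = 0 := by
  intro u v w x y z
  have hs : ∀ a b : M → E, g (rop conn br u v a) b = - g (rop conn br u v b) a :=
    fun a b => by
      rw [g_rop_skew D conn br g hDa hDbr hMet hGs hGa u v a b, hGs]
  simp only [gten]
  rw [hGs x (rop conn br u v y), hGs w (rop conn br u v y),
      hGs x (rop conn br u v z), hGs w (rop conn br u v z),
      hs w z, hs w y, hs x y, hs x z]
  ring

include hDv hDa hDbr hCa1 hTor in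
lemma ricci4 (T : (M → E) → (M → E) → (M → E) → (M → E) → M → ℝ)
    (h1 : ∀ a b x y z, T (a - b) x y z = T a x y z - T b x y z)
    (h2 : ∀ w a b y z, T w (a - b) y z = T w a y z - T w b y z)
    (h3 : ∀ w x a b z, T w x (a - b) z = T w x a z - T w x b z)
    (h4 : ∀ w x y a b, T w x y (a - b) = T w x y a - T w x y b)
    (u v w x y z : M → E) :
    curv4 D conn T u v w x y z
      = -(T (rop conn br u v w) x y z + T w (rop conn br u v x) y z
          + T w x (rop conn br u v y) z + T w x y (rop conn br u v z)) := by
  have Df := Df_sub D hDa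
  have hDD : D (conn u v) (T w x y z) - D (conn v u) (T w x y z)
      = D u (D v (T w x y z)) - D v (D u (T w x y z)) := by
    rw [← Dv_sub D hDv, hTor, hDbr]
  have hrw : ∀ c : M → E, rop conn br u v c
      = conn u (conn v c) - conn v (conn u c)
        - (conn (conn u v) c - conn (conn v u) c) := fun c => by
    rw [rop, ← hTor u v, conn_sub1 conn hCa1]
  have hw : T (rop conn br u v w) x y z
      = T (conn u (conn v w)) x y z - T (conn v (conn u w)) x y z
        - (T (conn (conn u v) w) x y z - T (conn (conn v u) w) x y z) := by
    rw [hrw w, h1, h1, h1]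
  have hx : T w (rop conn br u v x) y z
      = T w (conn u (conn v x)) y z - T w (conn v (conn u x)) y z
        - (T w (conn (conn u v) x) y z - T w (conn (conn v u) x) y z) := by
    rw [hrw x, h2, h2, h2]
  have hy : T w x (rop conn br u v y) z
      = T w x (conn u (conn v y)) z - T w x (conn v (conn u y)) z
        - (T w x (conn (conn u v) y) z - T w x (conn (conn v u) y) z) := by
    rw [hrw y, h3, h3, h3]
  have hz : T w x y (rop conn br u v z)
      = T w x y (conn u (conn v z)) - T w x y (conn v (conn u z))
        - (T w x y (conn (conn u v) z) - T w x y (conn (conn v u) z)) := by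
    rw [hrw z, h4, h4, h4]
  simp only [curv4, scd4, cd5, cd4, Df]
  rw [hw, hx, hy, hz]
  linear_combination -hDD

lemma recur_curv (T : (M → E) → (M → E) → (M → E) → (M → E) → M → ℝ)
    (lam : (M → E) → M → ℝ)
    (hDm' : ∀ u f h, D u (f * h) = D u f * h + f * D u h)
    (hrec : ∀ u w x y z, cd4 D conn T u w x y z = lam u * T w x y z)
    (u v w x y z : M → E) :
    curv4 D conn T u v w x y z
      = cd1 D conn lam u v * T w x y z - cd1 D conn lam v u * T w x y z := by
  have hscd : ∀ a b : M → E, scd4 D conn T a b w x y z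
      = cd1 D conn lam a b * T w x y z + lam b * (lam a * T w x y z) := by
    intro a b
    simp only [scd4, cd5, hrec, cd1]
    rw [hDm' a (lam b) (T w x y z), ← hrec a w x y z]
    simp only [cd4]; ring
  simp only [curv4, hscd]; ring

section Cten

variable {n : ℕ} (einv e : Fin n → M → E)

include hDa hDbr hJac hCa1 hCa2 hTor hMet hGs hGa in
lemma cten_pair : ∀ w x y z : M → E,
    cten g conn br einv e w x y z = cten g conn br einv e y z w x := by
  intro w x y z
  funext p
  have h1 := congrFun
    (rten_pair D conn br g hDa hDbr hJac hCa1 hCa2 hTor hMet hGs hGa w x y z) p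
  have h2 := congrFun (gten_pair g hGs w x y z) p
  simp only [cten]
  rw [h1, h2]

include hCa1 hCa2 hTor hGa in
lemma cten_sub1 : ∀ a b x y z : M → E,
    cten g conn br einv e (a - b) x y z
      = cten g conn br einv e a x y z - cten g conn br einv e b x y z := by
  intro a b x y z
  funext p
  have h1 := congrFun (rten_sub1 conn br g hCa1 hCa2 hTor hGa a b x y z) p
  have h2 := congrFun (gten_sub1 g hGa a b x y z) p
  simp only [Pi.sub_apply] at h1 h2
  simp only [cten, Pi.sub_apply]
  rw [h1, h2]; ring

include hCa1 hCa2 hTor hGa in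
lemma cten_sub2 : ∀ w a b y z : M → E,
    cten g conn br einv e w (a - b) y z
      = cten g conn br einv e w a y z - cten g conn br einv e w b y z := by
  intro w a b y z
  funext p
  have h1 := congrFun (rten_sub2 conn br g hCa1 hCa2 hTor hGa w a b y z) p
  have h2 := congrFun (gten_sub2 g hGa w a b y z) p
  simp only [Pi.sub_apply] at h1 h2
  simp only [cten, Pi.sub_apply]
  rw [h1, h2]; ring

include hCa2 hGs hGa in
lemma cten_sub3 : ∀ w x a b z : M → E,
    cten g conn br einv e w x (a - b) z
      = cten g conn br einv e w x a z - cten g conn br einv e w x b z := by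
  intro w x a b z
  funext p
  have h1 := congrFun (rten_sub3 conn br g hCa2 hGa w x a b z) p
  have h2 := congrFun (gten_sub3 g hGs hGa w x a b z) p
  simp only [Pi.sub_apply] at h1 h2
  simp only [cten, Pi.sub_apply]
  rw [h1, h2]; ring

include hGs hGa in
lemma cten_sub4 : ∀ w x y a b : M → E,
    cten g conn br einv e w x y (a - b)
      = cten g conn br einv e w x y a - cten g conn br einv e w x y b := by
  intro w x y a b
  funext p
  have h1 := congrFun (rten_sub4 conn br g hGs hGa w x y a b) p
  have h2 := congrFun (gten_sub4 g hGs hGa w x y a b) p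
  simp only [Pi.sub_apply] at h1 h2
  simp only [cten, Pi.sub_apply]
  rw [h1, h2]; ring

include hDa hDbr hMet hGs hGa in
lemma qc_eq_qr : ∀ u v w x y z : M → E,
    cten g conn br einv e (rop conn br u v w) x y z
      + cten g conn br einv e w (rop conn br u v x) y z
      + cten g conn br einv e w x (rop conn br u v y) z
      + cten g conn br einv e w x y (rop conn br u v z)
    = rten g conn br (rop conn br u v w) x y z
      + rten g conn br w (rop conn br u v x) y z
      + rten g conn br w x (rop conn br u v y) z
      + rten g conn br w x y (rop conn br u v z) := by
  intro u v w x y z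
  funext p
  have hg := congrFun (qg_zero D conn br g hDa hDbr hMet hGs hGa u v w x y z) p
  simp only [Pi.add_apply, Pi.zero_apply] at hg
  simp only [cten, Pi.add_apply]
  linear_combination (-(scal g conn br einv e p / ((n : ℝ) * ((n : ℝ) - 1)))) * hg

end Cten

end Aux2


end ConcRec


open ConcRec in
/-- Step 1: for a concircularly recurrent manifold (`∇C = λ ⊗ C`, `C` nowhere zero,
`dim = n ≥ 3`), the recurrence form `λ` is closed: `dλ = 0`, i.e.
`(∇_u λ)(v) = (∇_v λ)(u)`. -/
theorem recurrence_form_closed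
    {M : Type*} {E : Type*} [AddCommGroup E] [Module ℝ E]
    (D : (M → E) → (M → ℝ) → (M → ℝ)) (conn br : (M → E) → (M → E) → (M → E))
    (g : (M → E) → (M → E) → (M → ℝ)) (hLC : IsLC D conn br g)
    {n : ℕ} (hn : 3 ≤ n) (einv e : Fin n → M → E) (hframe : IsDualFrame g einv e)
    (lam : (M → E) → M → ℝ) (hlam : IsOneForm lam)
    (hC0 : ∀ p : M, ∃ w x y z, cten g conn br einv e w x y z p ≠ 0)
    (hrec : ∀ u w x y z, cd4 D conn (cten g conn br einv e) u w x y z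
      = lam u * cten g conn br einv e w x y z) :
    ∀ u v, cd1 D conn lam u v = cd1 D conn lam v u := by
  obtain ⟨hDv, hDs, hDa, hDm, hDc, hDbr, hJac, hCa1, hCa2, hCs1, hCs2, hTor,
    hMet, hGs, hGsm, hGa⟩ := hLC
  have mainR : ∀ u v w x y z : M → E,
      (cd1 D conn lam u v - cd1 D conn lam v u) * cten g conn br einv e w x y z
        = -(rten g conn br (rop conn br u v w) x y z
            + rten g conn br w (rop conn br u v x) y z
            + rten g conn br w x (rop conn br u v y) z
            + rten g conn br w x y (rop conn br u v z)) := by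
    intro u v w x y z
    have e1 := recur_curv D conn (cten g conn br einv e) lam hDm hrec u v w x y z
    have e2 := ricci4 D conn br hDv hDa hDbr hCa1 hTor (cten g conn br einv e)
      (cten_sub1 conn br g hCa1 hCa2 hTor hGa einv e)
      (cten_sub2 conn br g hCa1 hCa2 hTor hGa einv e)
      (cten_sub3 conn br g hCa2 hGs hGa einv e)
      (cten_sub4 conn br g hGs hGa einv e) u v w x y z
    have e3 := qc_eq_qr D conn br g hDa hDbr hMet hGs hGa einv e u v w x y z
    linear_combination e2 - e1 - e3
  have I : ∀ u v w x y z : M → E,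
      (cd1 D conn lam u v - cd1 D conn lam v u) * cten g conn br einv e w x y z
        + (cd1 D conn lam w x - cd1 D conn lam x w) * cten g conn br einv e y z u v
        + (cd1 D conn lam y z - cd1 D conn lam z y) * cten g conn br einv e u v w x
        = 0 := by
    intro u v w x y z
    have c := cyc_sum_zero D conn br g hDa hDbr hJac hCa1 hCa2 hTor hMet hGs hGa
      u v w x y z
    linear_combination mainR u v w x y z + mainR w x y z u v + mainR y z u v w x - c
  intro u v
  funext p
  by_contra hne
  have ha : cd1 D conn lam u v p - cd1 D conn lam v u p ≠ 0 := sub_ne_zero.mpr hne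
  obtain ⟨w, x, y, z, hC⟩ := hC0 p
  have Ip : ∀ a b c d a' b' : M → E,
      (cd1 D conn lam a b p - cd1 D conn lam b a p) * cten g conn br einv e c d a' b' p
        + (cd1 D conn lam c d p - cd1 D conn lam d c p) * cten g conn br einv e a' b' a b p
        + (cd1 D conn lam a' b' p - cd1 D conn lam b' a' p) * cten g conn br einv e a b c d p
        = 0 := by
    intro a b c d a' b'
    have h := congrFun (I a b c d a' b') p
    simpa only [Pi.add_apply, Pi.mul_apply, Pi.sub_apply, Pi.zero_apply] using h
  have pr : ∀ a b c d : M → E,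
      cten g conn br einv e a b c d p = cten g conn br einv e c d a b p := fun a b c d =>
    congrFun (cten_pair D conn br g hDa hDbr hJac hCa1 hCa2 hTor hMet hGs hGa
      einv e a b c d) p
  have h1 : cten g conn br einv e u v u v p = 0 := by
    have h0 := Ip u v u v u v
    have hm : (cd1 D conn lam u v p - cd1 D conn lam v u p)
        * cten g conn br einv e u v u v p = 0 := by linarith
    exact (mul_eq_zero.mp hm).resolve_left ha
  have h2 : ∀ c d : M → E, cten g conn br einv e u v c d p = 0 := by
    intro c d
    have h0 := Ip u v c d u v
    rw [pr c d u v, h1] at h0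
    have hm : (cd1 D conn lam u v p - cd1 D conn lam v u p)
        * cten g conn br einv e u v c d p = 0 := by linarith
    exact (mul_eq_zero.mp hm).resolve_left ha
  have h3 := Ip w x y z u v
  rw [pr y z u v, h2 y z, h2 w x] at h3
  have hm : (cd1 D conn lam u v p - cd1 D conn lam v u p)
      * cten g conn br einv e w x y z p = 0 := by linarith
  exact hC ((mul_eq_zero.mp hm).resolve_left ha)
end

section
/- Let (M,g) be a pseudo-Riemannian manifold whose Riemann curvature tensor satisfies ∇R = λ ⊗ R + μ ⊗ G with dλ = 0, for 1-forms λ, μ. Then 𝓡(U,V)R = 2(dμ + μ∧λ)(U,V)·G for all vector fields U,V, where (μ∧λ)(U,V) = ½(μ(U)λ(V) - μ(V)λ(U)). -/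
open ConcRec in
/-- If `∇R = λ ⊗ R + μ ⊗ G` with `dλ = 0`, then
`𝓡(u,v)R = 2(dμ + μ∧λ)(u,v) G`, where
`2(dμ + μ∧λ)(u,v) = (∇_u μ)(v) - (∇_v μ)(u) + μ(u)λ(v) - μ(v)λ(u)`. -/
theorem curvature_action_on_R
    {M : Type*} {E : Type*} [AddCommGroup E] [Module ℝ E]
    (D : (M → E) → (M → ℝ) → (M → ℝ)) (conn br : (M → E) → (M → E) → (M → E))
    (g : (M → E) → (M → E) → (M → ℝ)) (hLC : IsLC D conn br g)
    (lam mu : (M → E) → M → ℝ) (hlam : IsOneForm lam) (hmu : IsOneForm mu)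
    (hclosed : ∀ u v, cd1 D conn lam u v = cd1 D conn lam v u)
    (hyp : ∀ u w x y z, cd4 D conn (rten g conn br) u w x y z
      = lam u * rten g conn br w x y z + mu u * gten g w x y z) :
    ∀ u v w x y z, curv4 D conn (rten g conn br) u v w x y z
      = (cd1 D conn mu u v - cd1 D conn mu v u
          + mu u * lam v - mu v * lam u) * gten g w x y z := by
  intro u v w x y z
  obtain ⟨hDadd, hDsmul, hDadd2, hDmul, hDconst, hDbr, hjac, hc1, hc2, hc3, hc4,
    htor, hmet, hgsymm, hgsmul, hgadd⟩ := hLC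
  have hDsub : ∀ (a : M → E) (f h : M → ℝ), D a (f - h) = D a f - D a h := by
    intro a f h
    have h1 : D a ((f - h) + h) = D a (f - h) + D a h := hDadd2 a _ _
    have h2 : f - h + h = f := by ring
    rw [h2] at h1
    linear_combination -h1
  have hcdG : ∀ (a w x y z : M → E), D a (gten g w x y z) =
      gten g (conn a w) x y z + gten g w (conn a x) y z + gten g w x (conn a y) z
        + gten g w x y (conn a z) := by
    intro a w x y z
    simp only [gten]
    rw [hDsub, hDmul, hDmul, hmet, hmet, hmet, hmet]
    ring
  have hDR : ∀ (a w x y z : M → E), D a (rten g conn br w x y z) =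
      lam a * rten g conn br w x y z + mu a * gten g w x y z
        + rten g conn br (conn a w) x y z + rten g conn br w (conn a x) y z
        + rten g conn br w x (conn a y) z + rten g conn br w x y (conn a z) := by
    intro a w x y z
    have h := hyp a w x y z
    simp only [cd4] at h
    linear_combination h
  have hcl := hclosed u v
  simp only [cd1] at hcl ⊢
  simp only [curv4, scd4, cd5, hyp]
  rw [hDadd2, hDadd2, hDmul, hDmul, hDmul, hDmul, hDR, hDR, hcdG, hcdG]
  linear_combination hcl * rten g conn br w x y z
end

section
/- Let (M,g) be a pseudo-Riemannian manifold of dimension n ≥ 2 satisfying 𝓡(U,V)R = f(U,V)·G for all vector fields U,V, where f is a 2-form (alternating bilinear). Then, via the Walker identity and Walker's lemma applied to G (which is nowhere zero), f = 0; hence the manifold is semisymmetric: 𝓡(U,V)R = 0. -/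
section WalkerAux
set_option linter.unusedSectionVars false

open ConcRec

variable {M : Type*} {E : Type*} [AddCommGroup E] [Module ℝ E]
variable (D : (M → E) → (M → ℝ) → (M → ℝ)) (conn br : (M → E) → (M → E) → (M → E))
variable (g : (M → E) → (M → E) → (M → ℝ))

/-- Ricci identity for (0,4)-tensors additive in each slot. -/
theorem walker_ricci_identity
    (T : (M → E) → (M → E) → (M → E) → (M → E) → M → ℝ)
    (hDf_sub : ∀ u (f h : M → ℝ), D u (f - h) = D u f - D u h)
    (hDD : ∀ u v (F : M → ℝ), D (conn u v) F - D (conn v u) F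
      = D u (D v F) - D v (D u F))
    (htor : ∀ u v, conn u v - conn v u = br u v)
    (hc1_sub : ∀ u v w, conn (u - v) w = conn u w - conn v w)
    (hT1 : ∀ a b x y z, T (a - b) x y z = T a x y z - T b x y z)
    (hT2 : ∀ w a b y z, T w (a - b) y z = T w a y z - T w b y z)
    (hT3 : ∀ w x a b z, T w x (a - b) z = T w x a z - T w x b z)
    (hT4 : ∀ w x y a b, T w x y (a - b) = T w x y a - T w x y b) :
    ∀ u v w x y z, curv4 D conn T u v w x y z
      = -(T (rop conn br u v w) x y z + T w (rop conn br u v x) y z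
          + T w x (rop conn br u v y) z + T w x y (rop conn br u v z)) := by
  intro u v w x y z
  simp only [curv4, scd4, cd5, cd4, rop, hDf_sub, ← htor, hc1_sub, hT1, hT2, hT3, hT4]
  linear_combination -hDD u v (T w x y z)


theorem walker_rop_sub1
    (htor : ∀ u v, conn u v - conn v u = br u v)
    (hc1_sub : ∀ u v w, conn (u - v) w = conn u w - conn v w)
    (hc2_sub : ∀ u v w, conn u (v - w) = conn u v - conn u w) :
    ∀ a b v w, rop conn br (a - b) v w = rop conn br a v w - rop conn br b v w := by
  intro a b v w
  simp only [rop, ← htor, hc1_sub, hc2_sub]; abel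

theorem walker_rop_sub2
    (htor : ∀ u v, conn u v - conn v u = br u v)
    (hc1_sub : ∀ u v w, conn (u - v) w = conn u w - conn v w)
    (hc2_sub : ∀ u v w, conn u (v - w) = conn u v - conn u w) :
    ∀ u a b w, rop conn br u (a - b) w = rop conn br u a w - rop conn br u b w := by
  intro u a b w
  simp only [rop, ← htor, hc1_sub, hc2_sub]; abel

theorem walker_rop_sub3
    (htor : ∀ u v, conn u v - conn v u = br u v)
    (hc1_sub : ∀ u v w, conn (u - v) w = conn u w - conn v w)
    (hc2_sub : ∀ u v w, conn u (v - w) = conn u v - conn u w) :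
    ∀ u v a b, rop conn br u v (a - b) = rop conn br u v a - rop conn br u v b := by
  intro u v a b
  simp only [rop, ← htor, hc1_sub, hc2_sub]; abel

theorem walker_rop_anti
    (htor : ∀ u v, conn u v - conn v u = br u v)
    (hc1_sub : ∀ u v w, conn (u - v) w = conn u w - conn v w) :
    ∀ u v w, rop conn br u v w = -(rop conn br v u w) := by
  intro u v w
  simp only [rop, ← htor, hc1_sub]; abel

theorem walker_bianchi
    (htor : ∀ u v, conn u v - conn v u = br u v)
    (hc2_sub : ∀ u v w, conn u (v - w) = conn u v - conn u w)
    (hJac : ∀ u v w, br u (br v w) + br v (br w u) + br w (br u v) = 0) :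
    ∀ u v w, rop conn br u v w + rop conn br v w u + rop conn br w u v = 0 := by
  intro u v w
  have key : ∀ a b c, conn a (br b c) = conn a (conn b c) - conn a (conn c b) := by
    intro a b c; rw [← htor, hc2_sub]
  have e : rop conn br u v w + rop conn br v w u + rop conn br w u v
      = (conn u (br v w) - conn (br v w) u) + (conn v (br w u) - conn (br w u) v)
        + (conn w (br u v) - conn (br u v) w) := by
    simp only [rop, key]; abel
  rw [e, htor, htor, htor]; exact hJac u v w

theorem walker_skew
    (hD_fadd : ∀ u (f h : M → ℝ), D u (f + h) = D u f + D u h)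
    (hD_br : ∀ u v f, D (br u v) f = D u (D v f) - D v (D u f))
    (htor : ∀ u v, conn u v - conn v u = br u v)
    (hc1_sub : ∀ u v w, conn (u - v) w = conn u w - conn v w)
    (hmet : ∀ u x y, D u (g x y) = g (conn u x) y + g x (conn u y))
    (hg_sub1 : ∀ x y z, g (x - y) z = g x z - g y z)
    (hg_sub2 : ∀ x y z, g x (y - z) = g x y - g x z) :
    ∀ u v y z, g (rop conn br u v y) z = -(g y (rop conn br u v z)) := by
  intro u v y z
  have e1 : D u (D v (g y z))
      = g (conn u (conn v y)) z + g (conn v y) (conn u z)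
        + (g (conn u y) (conn v z) + g y (conn u (conn v z))) := by
    rw [hmet v y z, hD_fadd, hmet u, hmet u]
  have e2 : D v (D u (g y z))
      = g (conn v (conn u y)) z + g (conn u y) (conn v z)
        + (g (conn v y) (conn u z) + g y (conn v (conn u z))) := by
    rw [hmet u y z, hD_fadd, hmet v, hmet v]
  have e3 : g (conn (br u v) y) z + g y (conn (br u v) z)
      = D u (D v (g y z)) - D v (D u (g y z)) := by
    rw [← hmet (br u v) y z]; exact hD_br u v (g y z)
  rw [← htor, hc1_sub, hc1_sub, hg_sub1, hg_sub2] at e3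
  simp only [rop, ← htor, hc1_sub, hg_sub1, hg_sub2]
  linear_combination e2 - e1 - e3

theorem walker_rten_anti1
    (hropa : ∀ u v w, rop conn br u v w = -(rop conn br v u w))
    (hg_neg1 : ∀ x z, g (-x) z = -(g x z)) :
    ∀ u v y z, rten g conn br u v y z = -(rten g conn br v u y z) := by
  intro u v y z
  simp only [rten]
  rw [hropa u v y, hg_neg1]

theorem walker_rten_anti2
    (hskew : ∀ u v y z, g (rop conn br u v y) z = -(g y (rop conn br u v z)))
    (hg_symm : ∀ x y, g x y = g y x) :
    ∀ w x y z, rten g conn br w x y z = -(rten g conn br w x z y) := by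
  intro w x y z
  simp only [rten]
  rw [hskew w x y z, hg_symm y]

theorem walker_rten_bianchi
    (hbia : ∀ u v w, rop conn br u v w + rop conn br v w u + rop conn br w u v = 0)
    (hg_add1 : ∀ x y z, g (x + y) z = g x z + g y z)
    (hg_zero1 : ∀ z, g 0 z = 0) :
    ∀ u v w d, rten g conn br u v w d + rten g conn br v w u d + rten g conn br w u v d = 0 := by
  intro u v w d
  simp only [rten]
  rw [← hg_add1, ← hg_add1, hbia, hg_zero1]

theorem walker_rten_pair
    (hS1 : ∀ u v y z, rten g conn br u v y z = -(rten g conn br v u y z))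
    (hS2 : ∀ w x y z, rten g conn br w x y z = -(rten g conn br w x z y))
    (hS3 : ∀ u v w d, rten g conn br u v w d + rten g conn br v w u d
      + rten g conn br w u v d = 0) :
    ∀ w x y z, rten g conn br w x y z = rten g conn br y z w x := by
  intro w x y z
  funext p
  have A1 : ∀ a b c d, rten g conn br a b c d p = -(rten g conn br b a c d p) := by
    intro a b c d; have := congrFun (hS1 a b c d) p; simpa using this
  have A2 : ∀ a b c d, rten g conn br a b c d p = -(rten g conn br a b d c p) := by
    intro a b c d; have := congrFun (hS2 a b c d) p; simpa using this
  have B : ∀ a b c d, rten g conn br a b c d p + rten g conn br b c a d p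
      + rten g conn br c a b d p = 0 := by
    intro a b c d; have := congrFun (hS3 a b c d) p; simpa using this
  linear_combination (1/2 : ℝ) * A2 w x y z + (1/2 : ℝ) * B w x y z
    - (1/2 : ℝ) * B w x z y - (1/2 : ℝ) * A1 w y x z + (1/2 : ℝ) * A2 w y x z
    - (1/2 : ℝ) * B w y z x + (1/2 : ℝ) * A1 w z x y - (1/2 : ℝ) * A2 w z x y
    + (1/2 : ℝ) * A1 w z y x - (1/2 : ℝ) * A2 x y w z + (1/2 : ℝ) * B x y z w
    + (1/2 : ℝ) * A2 x z w y - (1/2 : ℝ) * A1 x z y w - (1/2 : ℝ) * A2 y z w x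

theorem walker_double_skew
    (hskew : ∀ u v y z, g (rop conn br u v y) z = -(g y (rop conn br u v z)))
    (hg_symm : ∀ x y, g x y = g y x) :
    ∀ a b c d pp q, g (rop conn br a b (rop conn br c d pp)) q
      = g (rop conn br c d (rop conn br a b q)) pp := by
  intro a b c d pp q
  have h1 := hskew a b (rop conn br c d pp) q
  have h2 := hskew c d (rop conn br a b q) pp
  have h3 := hg_symm (rop conn br c d pp) (rop conn br a b q)
  linear_combination h1 - h2 - h3

theorem walker_identity_s10
    (hric : ∀ u v w x y z, curv4 D conn (rten g conn br) u v w x y z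
      = -(rten g conn br (rop conn br u v w) x y z
          + rten g conn br w (rop conn br u v x) y z
          + rten g conn br w x (rop conn br u v y) z
          + rten g conn br w x y (rop conn br u v z)))
    (hS1 : ∀ u v y z, rten g conn br u v y z = -(rten g conn br v u y z))
    (hS2 : ∀ w x y z, rten g conn br w x y z = -(rten g conn br w x z y))
    (hpair : ∀ w x y z, rten g conn br w x y z = rten g conn br y z w x)
    (hP : ∀ a b c d pp q, g (rop conn br a b (rop conn br c d pp)) q
      = g (rop conn br c d (rop conn br a b q)) pp) :
    ∀ u v w x y z, curv4 D conn (rten g conn br) u v w x y z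
      + curv4 D conn (rten g conn br) w x y z u v
      + curv4 D conn (rten g conn br) y z u v w x = 0 := by
  have c1 : ∀ a b w x y z, rten g conn br (rop conn br a b w) x y z
      = g (rop conn br y z (rop conn br a b w)) x := by
    intro a b w x y z; rw [hpair]; rfl
  have c2 : ∀ a b w x y z, rten g conn br w (rop conn br a b x) y z
      = -(g (rop conn br y z (rop conn br a b x)) w) := by
    intro a b w x y z; rw [hS1, hpair]; rfl
  have c3 : ∀ a b w x y z, rten g conn br w x (rop conn br a b y) z
      = g (rop conn br w x (rop conn br a b y)) z := fun _ _ _ _ _ _ => rfl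
  have c4 : ∀ a b w x y z, rten g conn br w x y (rop conn br a b z)
      = -(g (rop conn br w x (rop conn br a b z)) y) := by
    intro a b w x y z; rw [hS2]; rfl
  intro u v w x y z
  rw [hric u v w x y z, hric w x y z u v, hric y z u v w x]
  linear_combination
    - c1 u v w x y z - c2 u v w x y z - c3 u v w x y z - c4 u v w x y z
    - c1 w x y z u v - c2 w x y z u v - c3 w x y z u v - c4 w x y z u v
    - c1 y z u v w x - c2 y z u v w x - c3 y z u v w x - c4 y z u v w x
    - hP u v y z w x - hP y z u v w x - hP u v w x y z
    - hP w x u v y z - hP w x y z u v - hP y z w x u v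

end WalkerAux

open ConcRec in
/-- If `𝓡(u,v)R = f(u,v) G` for a 2-form `f`, with `G` nowhere zero (`n ≥ 2`), then `f = 0`
and the manifold is semisymmetric: `𝓡(u,v)R = 0`. -/
theorem semisymmetry_from_G_proportionality
    {M : Type*} {E : Type*} [AddCommGroup E] [Module ℝ E]
    (D : (M → E) → (M → ℝ) → (M → ℝ)) (conn br : (M → E) → (M → E) → (M → E))
    (g : (M → E) → (M → E) → (M → ℝ)) (hLC : IsLC D conn br g)
    {n : ℕ} (hn : 2 ≤ n) (einv e : Fin n → M → E) (hframe : IsDualFrame g einv e)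
    (f : (M → E) → (M → E) → M → ℝ)
    (hf_add : ∀ u v w, f (u + v) w = f u w + f v w)
    (hf_smul : ∀ (h : M → ℝ) u v, f (fun p => h p • u p) v = h * f u v)
    (hf_alt : ∀ u v, f u v = - f v u)
    (hG0 : ∀ p : M, ∃ w x y z, gten g w x y z p ≠ 0)
    (hyp : ∀ u v w x y z, curv4 D conn (rten g conn br) u v w x y z
      = f u v * gten g w x y z) :
    (∀ u v, f u v = 0) ∧
    (∀ u v w x y z, curv4 D conn (rten g conn br) u v w x y z = 0) := by

  obtain ⟨hD_add, hD_smul, hD_fadd, hD_leib, hD_const, hD_br, hJac, hc_add1, hc_add2,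
    hc_sm1, hc_sm2, htor, hmet, hg_symm, hg_sm, hg_add⟩ := hLC
  -- derived subtraction rules
  have hDf_sub : ∀ u (f h : M → ℝ), D u (f - h) = D u f - D u h := by
    intro u f h
    have h1 := hD_fadd u (f - h) h
    rw [sub_add_cancel] at h1
    exact eq_sub_of_add_eq h1.symm
  have hDv_sub : ∀ u v (f : M → ℝ), D (u - v) f = D u f - D v f := by
    intro u v f
    have h1 := hD_add (u - v) v f
    rw [sub_add_cancel] at h1
    exact eq_sub_of_add_eq h1.symm
  have hc1_sub : ∀ u v w, conn (u - v) w = conn u w - conn v w := by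
    intro u v w
    have h1 := hc_add1 (u - v) v w
    rw [sub_add_cancel] at h1
    exact eq_sub_of_add_eq h1.symm
  have hc2_sub : ∀ u v w, conn u (v - w) = conn u v - conn u w := by
    intro u v w
    have h1 := hc_add2 u (v - w) w
    rw [sub_add_cancel] at h1
    exact eq_sub_of_add_eq h1.symm
  have hg_sub1 : ∀ x y z, g (x - y) z = g x z - g y z := by
    intro x y z
    have h1 := hg_add (x - y) y z
    rw [sub_add_cancel] at h1
    exact eq_sub_of_add_eq h1.symm
  have hg_sub2 : ∀ x y z, g x (y - z) = g x y - g x z := by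
    intro x y z
    rw [hg_symm, hg_sub1, hg_symm y x, hg_symm z x]
  have hg_zero1 : ∀ z, g 0 z = 0 := by
    intro z
    have h1 := hg_sub1 0 0 z
    rw [sub_self, sub_self] at h1
    exact h1
  have hg_neg1 : ∀ x z, g (-x) z = -(g x z) := by
    intro x z
    have h1 := hg_sub1 0 x z
    rw [zero_sub, hg_zero1, zero_sub] at h1
    exact h1
  have hDD : ∀ u v (F : M → ℝ), D (conn u v) F - D (conn v u) F
      = D u (D v F) - D v (D u F) := by
    intro u v F
    rw [← hDv_sub, htor, hD_br]
  -- curvature-tensor ingredients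
  have hropa := walker_rop_anti conn br htor hc1_sub
  have hbia := walker_bianchi conn br htor hc2_sub hJac
  have hskew := walker_skew D conn br g hD_fadd hD_br htor hc1_sub hmet hg_sub1 hg_sub2
  have hS1 := walker_rten_anti1 conn br g hropa hg_neg1
  have hS2 := walker_rten_anti2 conn br g hskew hg_symm
  have hS3 := walker_rten_bianchi conn br g hbia hg_add hg_zero1
  have hpair := walker_rten_pair conn br g hS1 hS2 hS3
  have hP := walker_double_skew conn br g hskew hg_symm
  have hR1 : ∀ a b x y z, rten g conn br (a - b) x y z
      = rten g conn br a x y z - rten g conn br b x y z := by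
    intro a b x y z
    simp only [rten]
    rw [walker_rop_sub1 conn br htor hc1_sub hc2_sub, hg_sub1]
  have hR2 : ∀ w a b y z, rten g conn br w (a - b) y z
      = rten g conn br w a y z - rten g conn br w b y z := by
    intro w a b y z
    simp only [rten]
    rw [walker_rop_sub2 conn br htor hc1_sub hc2_sub, hg_sub1]
  have hR3 : ∀ w x a b z, rten g conn br w x (a - b) z
      = rten g conn br w x a z - rten g conn br w x b z := by
    intro w x a b z
    simp only [rten]
    rw [walker_rop_sub3 conn br htor hc1_sub hc2_sub, hg_sub1]
  have hR4 : ∀ w x y a b, rten g conn br w x y (a - b)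
      = rten g conn br w x y a - rten g conn br w x y b := by
    intro w x y a b
    simp only [rten]
    rw [hg_sub2]
  have hric := walker_ricci_identity D conn br (rten g conn br) hDf_sub hDD htor hc1_sub
    hR1 hR2 hR3 hR4
  have WI := walker_identity_s10 D conn br g hric hS1 hS2 hpair hP
  -- the cyclic identity for f and G
  have key : ∀ u v w x y z, f u v * gten g w x y z + f w x * gten g y z u v
      + f y z * gten g u v w x = 0 := by
    intro u v w x y z
    rw [← hyp u v w x y z, ← hyp w x y z u v, ← hyp y z u v w x]
    exact WI u v w x y z
  have hGpair : ∀ w x y z, gten g w x y z = gten g y z w x := by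
    intro w x y z
    simp only [gten]
    rw [hg_symm z w, hg_symm y x, hg_symm y w, hg_symm z x]
    ring
  -- Walker's lemma, pointwise
  have hf0 : ∀ u v, f u v = 0 := by
    intro u v
    funext p
    show f u v p = 0
    by_contra hne
    have hB00 : gten g u v u v p = 0 := by
      have e1 := congrFun (key u v u v u v) p
      simp only [Pi.add_apply, Pi.mul_apply, Pi.zero_apply] at e1
      have h2 : f u v p * gten g u v u v p = 0 := by linarith
      exact (mul_eq_zero.mp h2).resolve_left hne
    have hB1 : ∀ w x, gten g u v w x p = 0 := by
      intro w x
      have e2 := congrFun (key u v w x u v) p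
      simp only [Pi.add_apply, Pi.mul_apply, Pi.zero_apply] at e2
      have hGp := congrFun (hGpair w x u v) p
      rw [hGp, hB00] at e2
      simp only [mul_zero] at e2
      have h2 : f u v p * gten g u v w x p = 0 := by linarith
      exact (mul_eq_zero.mp h2).resolve_left hne
    obtain ⟨w, x, y, z, hnz⟩ := hG0 p
    have e3 := congrFun (key u v w x y z) p
    simp only [Pi.add_apply, Pi.mul_apply, Pi.zero_apply] at e3
    have hGp1 := congrFun (hGpair y z u v) p
    rw [hGp1, hB1 y z, hB1 w x] at e3
    simp only [mul_zero] at e3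
    have h2 : f u v p * gten g w x y z p = 0 := by linarith
    exact hnz ((mul_eq_zero.mp h2).resolve_left hne)
  refine ⟨hf0, fun u v w x y z => ?_⟩
  rw [hyp, hf0, zero_mul]
end

section
/- Expansion identity: let V be a vector space with nondegenerate symmetric bilinear form g, R an algebraic curvature tensor, G and 𝓖 as below. Then for all U,V,W,X,Y,Z: G(𝓡(U,V)W,X,Y,Z) + R(𝓖(U,V)W,X,Y,Z) + G(W,𝓡(U,V)X,Y,Z) + R(W,𝓖(U,V)X,Y,Z) + G(W,X,𝓡(U,V)Y,Z) + R(W,X,𝓖(U,V)Y,Z) + G(W,X,Y,𝓡(U,V)Z) + R(W,X,Y,𝓖(U,V)Z) equals g(V,W)R(U,X,Y,Z) - g(U,W)R(V,X,Y,Z) + g(V,X)R(W,U,Y,Z) - g(U,X)R(W,V,Y,Z) + g(V,Y)R(W,X,U,Z) - g(U,Y)R(W,X,V,Z) + g(V,Z)R(W,X,Y,U) - g(U,Z)R(W,X,Y,V). -/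
/- Algebraic framework: tensors on a real vector space `V`, given as plain maps with
   multilinearity hypotheses; traces with respect to a nondegenerate symmetric bilinear
   form `g` are computed via a `g`-dual pair of bases (`IsDualBasis`). -/

namespace ConcRecAlg

variable {V : Type*} [AddCommGroup V] [Module ℝ V]

/-- Multilinearity of a (0,4)-tensor in each of its four slots. -/
def Quadrilinear (C : V → V → V → V → ℝ) : Prop :=
  (∀ (s t : ℝ) (a b c d e : V), C (s • a + t • b) c d e = s * C a c d e + t * C b c d e) ∧
  (∀ (s t : ℝ) (a b c d e : V), C c (s • a + t • b) d e = s * C c a d e + t * C c b d e) ∧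
  (∀ (s t : ℝ) (a b c d e : V), C c d (s • a + t • b) e = s * C c d a e + t * C c d b e) ∧
  (∀ (s t : ℝ) (a b c d e : V), C c d e (s • a + t • b) = s * C c d e a + t * C c d e b)

/-- Bilinearity of a (0,2)-tensor. -/
def Bilinear (d : V → V → ℝ) : Prop :=
  (∀ (s t : ℝ) (a b c : V), d (s • a + t • b) c = s * d a c + t * d b c) ∧
  (∀ (s t : ℝ) (a b c : V), d c (s • a + t • b) = s * d c a + t * d c b)

/-- Algebraic curvature tensor: multilinear, skew in the first and the last pairs,
symmetric under swap of pairs, and satisfying the first Bianchi identity. -/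
def IsACT (R : V → V → V → V → ℝ) : Prop :=
  Quadrilinear R ∧
  (∀ w x y z, R w x y z = - R x w y z) ∧
  (∀ w x y z, R w x y z = - R w x z y) ∧
  (∀ w x y z, R w x y z = R y z w x) ∧
  (∀ w x y z, R w x y z + R x y w z + R y w x z = 0)

/-- Nondegenerate symmetric bilinear form. -/
def IsMetric (g : V → V → ℝ) : Prop :=
  Bilinear g ∧ (∀ x y, g x y = g y x) ∧ (∀ x, (∀ y, g x y = 0) → x = 0)

/-- `einv` is the `g`-dual basis of the (spanning) family `e`. -/
def IsDualBasis (g : V → V → ℝ) {n : ℕ} (einv e : Fin n → V) : Prop :=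
  (∀ i j, g (einv i) (e j) = if i = j then (1 : ℝ) else 0) ∧
  (∀ x : V, x = ∑ i, g (einv i) x • e i)

/-- `G(w,x,y,z) = g(x,y)g(w,z) - g(w,y)g(x,z)`. -/
def gten (g : V → V → ℝ) (w x y z : V) : ℝ := g x y * g w z - g w y * g x z

/-- The operator `𝓖(u,v)w = g(v,w)u - g(u,w)v`. -/
def gop (g : V → V → ℝ) (u v w : V) : V := g v w • u - g u w • v

/-- The Ricci tensor `S(x,z) = Trace_g ((v,w) ↦ R(v,x,w,z))` computed in a `g`-dual basis. -/
def ricci (R : V → V → V → V → ℝ) {n : ℕ} (einv e : Fin n → V) (x z : V) : ℝ :=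
  ∑ i, R (einv i) x (e i) z

/-- The scalar curvature `r = Trace_g S`. -/
def scal (R : V → V → V → V → ℝ) {n : ℕ} (einv e : Fin n → V) : ℝ :=
  ∑ i, ricci R einv e (einv i) (e i)

end ConcRecAlg

open ConcRecAlg in
/-- Expansion identity: the mixed `G`/`R` derivation expression equals the 8-term
`g`-times-`R` expression. -/
theorem expansion_identity
    {V : Type*} [AddCommGroup V] [Module ℝ V]
    (g : V → V → ℝ) (hg : IsMetric g)
    (R : V → V → V → V → ℝ) (hR : IsACT R)
    (rop : V → V → V → V) (hrop : ∀ u v w z, g (rop u v w) z = R u v w z) :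
    ∀ u v w x y z : V,
      gten g (rop u v w) x y z + R (gop g u v w) x y z
      + gten g w (rop u v x) y z + R w (gop g u v x) y z
      + gten g w x (rop u v y) z + R w x (gop g u v y) z
      + gten g w x y (rop u v z) + R w x y (gop g u v z)
      = g v w * R u x y z - g u w * R v x y z
        + g v x * R w u y z - g u x * R w v y z
        + g v y * R w x u z - g u y * R w x v z
        + g v z * R w x y u - g u z * R w x y v := by
  obtain ⟨⟨R1, R2, R3, R4⟩, hskew1, hskew2, hpair, hbianchi⟩ := hR
  obtain ⟨⟨gb1, gb2⟩, gsym, gnd⟩ := hg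
  intro u v w x y z
  have hgop : ∀ (a b : ℝ) (p q : V), a • p - b • q = a • p + (-b) • q := by
    intros; rw [neg_smul, sub_eq_add_neg]
  have e1 : R (gop g u v w) x y z = g v w * R u x y z - g u w * R v x y z := by
    rw [gop, hgop, R1]; ring
  have e2 : R w (gop g u v x) y z = g v x * R w u y z - g u x * R w v y z := by
    rw [gop, hgop, R2]; ring
  have e3 : R w x (gop g u v y) z = g v y * R w x u z - g u y * R w x v z := by
    rw [gop, hgop, R3]; ring
  have e4 : R w x y (gop g u v z) = g v z * R w x y u - g u z * R w x y v := by
    rw [gop, hgop, R4]; ring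
  have f1 : gten g (rop u v w) x y z = g x y * R u v w z - R u v w y * g x z := by
    rw [gten, hrop, hrop]
  have f2 : gten g w (rop u v x) y z = R u v x y * g w z - g w y * R u v x z := by
    rw [gten, hrop, hrop]
  have f3 : gten g w x (rop u v y) z = R u v y x * g w z - R u v y w * g x z := by
    rw [gten, gsym x (rop u v y), gsym w (rop u v y), hrop, hrop]
  have f4 : gten g w x y (rop u v z) = g x y * R u v z w - g w y * R u v z x := by
    rw [gten, gsym w (rop u v z), gsym x (rop u v z), hrop, hrop]
  rw [e1, e2, e3, e4, f1, f2, f3, f4]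
  linear_combination (g x y) * hskew2 u v w z + (g w z) * hskew2 u v x y
    - (g x z) * hskew2 u v w y - (g w y) * hskew2 u v x z
end
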